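/- For 0 < ε < 1, the hyperbolic cross H_s = {ν ∈ ℕ₀^d : ∏_{k=1}^d (ν_k+1) ≤ s} satisfies #H_s ≤ ε^{−1}·s^{1+1/ε}·(1−ε)^{−d/ε}. In particular, taking ε = 1/2, #H_s ≤ 2·s³·4^d. -/

import Mathlib

/-! Rankin's trick: for `p ≥ 0` every `ν ∈ H_s` has weight `(s / ∏ (ν k + 1)) ^ p ≥ 1`, so `#H_s` is
at most `s ^ p` times the sum of `∏ (ν k + 1) ^ (-p)` over the whole box `{0, …, s - 1} ^ d`, and
that sum factors as `(∑ n < s, (n + 1) ^ (-p)) ^ d`. For `p > 1` the integral test bounds the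
one-dimensional sum by `p / (p - 1)`; `p = 1 / ε` gives the first estimate and `p = 2` the second. -/

/-- The hyperbolic cross `H_s ⊆ ℕ₀^d` as a finset: since each coordinate of an
index `ν ∈ H_s` satisfies `ν k + 1 ≤ s`, it can be realized as a filter of a
finite product set. -/
def hyperbolicCross (d s : ℕ) : Finset (Fin d → ℕ) :=
  (Fintype.piFinset fun _ : Fin d => Finset.range s).filter
    (fun ν => ∏ k, (ν k + 1) ≤ s)

open Finset

lemma integral_rpow_neg_from_one_le {p b : ℝ} (hp : 1 < p) (hb : 1 ≤ b) :
    ∫ x in (1 : ℝ)..b, x ^ (-p) ≤ 1 / (p - 1) := by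
  have hzero : (0 : ℝ) ∉ Set.uIcc 1 b := by
    rw [Set.uIcc_of_le hb]; exact fun h => by linarith [h.1]
  rw [integral_rpow (Or.inr ⟨by linarith, hzero⟩), Real.one_rpow, ← neg_div_neg_eq, neg_sub,
    neg_add', neg_neg]
  gcongr
  exact sub_le_self 1 (by positivity)

lemma sum_range_add_one_rpow_neg_le {p : ℝ} (hp : 1 < p) (N : ℕ) :
    ∑ n ∈ range N, ((n : ℝ) + 1) ^ (-p) ≤ p / (p - 1) := by
  rcases N with _ | m
  · simp only [range_zero, sum_empty]; exact div_nonneg (by linarith) (by linarith)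
  have hanti : AntitoneOn (fun x : ℝ => x ^ (-p)) (Set.Icc 1 (1 + m)) :=
    fun x hx y _ hxy => Real.rpow_le_rpow_of_nonpos (by linarith [hx.1]) hxy (by linarith)
  have htail : ∑ i ∈ range m, ((↑(i + 1) : ℝ) + 1) ^ (-p) ≤ 1 / (p - 1) := by
    calc ∑ i ∈ range m, ((↑(i + 1) : ℝ) + 1) ^ (-p)
        = ∑ i ∈ range m, (1 + ↑(i + 1) : ℝ) ^ (-p) := by simp only [add_comm]
      _ ≤ ∫ x in (1 : ℝ)..1 + m, x ^ (-p) := hanti.sum_le_integral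
      _ ≤ 1 / (p - 1) := integral_rpow_neg_from_one_le hp (by simp)
  rw [sum_range_succ', Nat.cast_zero, zero_add, Real.one_rpow]
  calc _ ≤ 1 / (p - 1) + 1 := by gcongr
    _ = p / (p - 1) := by rw [div_add_one (by linarith), add_sub_cancel]

lemma one_le_rpow_mul_prod_rpow_neg {ι : Type*} [Fintype ι] {s : ℕ} {ν : ι → ℕ}
    (hν : ∏ k, (ν k + 1) ≤ s) {p : ℝ} (hp : 0 ≤ p) :
    1 ≤ (s : ℝ) ^ p * ∏ k, ((ν k : ℝ) + 1) ^ (-p) := by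
  have hprod : (∏ k, ((ν k : ℝ) + 1)) ≤ s := by exact_mod_cast hν
  have hpos : 0 < ∏ k, ((ν k : ℝ) + 1) := by positivity
  rw [Real.finsetProd_rpow _ _ (fun _ _ => by positivity), Real.rpow_neg hpos.le,
    ← div_eq_mul_inv, ← Real.div_rpow (by positivity) hpos.le]
  exact Real.one_le_rpow ((one_le_div hpos).mpr hprod) hp

lemma card_hyperbolicCross_le_rpow_mul_pow (d s : ℕ) {p : ℝ} (hp : 0 ≤ p) :
    ((hyperbolicCross d s).card : ℝ)
      ≤ (s : ℝ) ^ p * (∑ n ∈ range s, ((n : ℝ) + 1) ^ (-p)) ^ d := by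
  classical
  calc ((hyperbolicCross d s).card : ℝ)
      = ∑ ν ∈ hyperbolicCross d s, 1 := by simp
    _ ≤ ∑ ν ∈ hyperbolicCross d s, (s : ℝ) ^ p * ∏ k, ((ν k : ℝ) + 1) ^ (-p) :=
        sum_le_sum fun _ hν => one_le_rpow_mul_prod_rpow_neg (mem_filter.mp hν).2 hp
    _ ≤ ∑ ν ∈ Fintype.piFinset fun _ : Fin d => range s,
          (s : ℝ) ^ p * ∏ k, ((ν k : ℝ) + 1) ^ (-p) :=
        sum_le_sum_of_subset_of_nonneg (filter_subset _ _) fun _ _ _ => by positivity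
    _ = (s : ℝ) ^ p * (∑ n ∈ range s, ((n : ℝ) + 1) ^ (-p)) ^ d := by
        rw [← mul_sum, ← prod_univ_sum (fun _ => range s) fun _ n => ((n : ℝ) + 1) ^ (-p),
          prod_const, card_univ, Fintype.card_fin]

lemma card_hyperbolicCross_le (d s : ℕ) {p : ℝ} (hp : 1 < p) :
    ((hyperbolicCross d s).card : ℝ) ≤ (s : ℝ) ^ p * (p / (p - 1)) ^ d := by
  refine (card_hyperbolicCross_le_rpow_mul_pow d s (by linarith)).trans ?_
  gcongr
  exact sum_range_add_one_rpow_neg_le hp s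

theorem hyperbolic_cross_cardinality_general (d s : ℕ) (hs : 1 ≤ s)
    (ε : ℝ) (hε0 : 0 < ε) (hε1 : ε < 1) :
    ((hyperbolicCross d s).card : ℝ)
        ≤ ε⁻¹ * (s : ℝ) ^ (1 + 1 / ε) * (1 - ε) ^ (-(d : ℝ) / ε) ∧
      (hyperbolicCross d s).card ≤ 2 * s ^ 3 * 4 ^ d := by
  constructor
  · have hbound := card_hyperbolicCross_le d s (p := 1 / ε) (by rw [lt_div_iff₀ hε0]; linarith)
    have hδ : 0 < 1 - ε := by linarith
    have hexp : ((1 - ε)⁻¹) ^ d ≤ (1 - ε) ^ (-(d : ℝ) / ε) := by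
      rw [inv_pow, ← Real.rpow_natCast, ← Real.rpow_neg hδ.le]
      refine Real.rpow_le_rpow_of_exponent_ge hδ (by linarith) ?_
      rw [div_le_iff₀ hε0]
      nlinarith [(Nat.cast_nonneg d : (0 : ℝ) ≤ d)]
    calc ((hyperbolicCross d s).card : ℝ)
        ≤ (s : ℝ) ^ (1 / ε) * ((1 - ε)⁻¹) ^ d := by
          rwa [show 1 / ε / (1 / ε - 1) = (1 - ε)⁻¹ by field_simp] at hbound
      _ ≤ 1 * (s : ℝ) ^ (1 + 1 / ε) * (1 - ε) ^ (-(d : ℝ) / ε) := by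
          rw [one_mul]
          gcongr
          · exact_mod_cast hs
          · linarith
      _ ≤ ε⁻¹ * (s : ℝ) ^ (1 + 1 / ε) * (1 - ε) ^ (-(d : ℝ) / ε) := by
          gcongr
          exact one_le_inv_iff₀.mpr ⟨hε0, hε1.le⟩
  · have hbound : (hyperbolicCross d s).card ≤ s ^ 2 * 2 ^ d := by
      have := card_hyperbolicCross_le d s (p := 2) one_lt_two
      rw [Real.rpow_two, show (2 : ℝ) / (2 - 1) = 2 by norm_num] at this
      exact_mod_cast this
    calc (hyperbolicCross d s).card ≤ s ^ 2 * 2 ^ d := hbound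
      _ ≤ 2 * s ^ 3 * 4 ^ d := by
          gcongr
          · nlinarith
          · norm_num

theorem hyperbolic_cross_cardinality (d s : ℕ) (hd : 1 ≤ d) (hs : 1 ≤ s)
    (ε : ℝ) (hε0 : 0 < ε) (hε1 : ε < 1) :
    ((hyperbolicCross d s).card : ℝ)
        ≤ ε⁻¹ * (s : ℝ) ^ (1 + 1 / ε) * (1 - ε) ^ (-(d : ℝ) / ε) ∧
      (hyperbolicCross d s).card ≤ 2 * s ^ 3 * 4 ^ d :=
  hyperbolic_cross_cardinality_general d s hs ε hε0 hε1
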